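/- arXiv:1310.0174 — 6 statements merged into one kernel-verified Lean document; each statement's English description precedes it below -/
import Mathlib

section
/- Let A be a normal idempotent n×n real matrix (n ≥ 2) and F defined relative to columns 1 and 2, i.e., f_{kl} = a_{k1} + a_{l2} - a_{k2} - a_{l1}. Then f_{12} = max over 1 ≤ k < l ≤ n of |f_{kl}|. -/
/-! The triangle inequality `a_{ik} + a_{kj} ≤ a_{ij}`, applied once through column `i` and once
through column `j`, squeezes every `f_{kl}` between `a_{ij} + a_{ji}` and `-(a_{ij} + a_{ji})`;
on a zero diagonal the upper bound is `f_{ij}` itself. -/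

theorem abs_cross_diff_le_of_triangle {ι : Type*} {A : ι → ι → ℝ}
    (hsub : ∀ i j k, A i k + A k j ≤ A i j) (i j k l : ι) :
    |A k i + A l j - A k j - A l i| ≤ -(A i j + A j i) := by
  rw [abs_le]
  constructor
  · linarith [hsub k i j, hsub l j i]
  · linarith [hsub k j i, hsub l i j]

/-- For a normal idempotent matrix `A` (order `n ≥ 2`) and `F` relative to
columns 1 and 2, `f_{12}` equals the maximum of `|f_{kl}|` over all pairs `k < l`. -/
theorem stmt4 (n : ℕ) (A : Matrix (Fin (n+2)) (Fin (n+2)) ℝ)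
    (hdiag : ∀ i, A i i = 0)
    (hsub : ∀ i j k, A i k + A k j ≤ A i j) :
    A 0 0 + A 1 1 - A 0 1 - A 1 0 =
      (Finset.univ.filter (fun p : Fin (n+2) × Fin (n+2) => p.1 < p.2)).sup'
        ⟨(0, 1), by simpa using Fin.zero_lt_one⟩
        (fun p => |A p.1 0 + A p.2 1 - A p.1 1 - A p.2 0|) := by
  have hf : A 0 0 + A 1 1 - A 0 1 - A 1 0 = -(A 0 1 + A 1 0) := by
    rw [hdiag, hdiag]; ring
  refine le_antisymm ?_ ?_
  · exact Finset.le_sup'_of_le _ (b := (0, 1)) (by simp) (le_abs_self _)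
  · rw [hf]
    exact Finset.sup'_le _ _ fun p _ => abs_cross_diff_le_of_triangle hsub 0 1 p.1 p.2
end

section
/- Let A be a normal idempotent n×n real matrix and let p, q ∈ ℝⁿ be its first and second columns. Then the tropical distance between the classes of p and q in ℝⁿ/ℝ(1,…,1) equals |a_{12} + a_{21}| = -(a_{12} + a_{21}). -/
/-- Normalized difference: the zero-last-coordinate representative of `p - q`. -/
noncomputable def normDiff (n : ℕ) (p q : Fin (n+1) → ℝ) : Fin (n+1) → ℝ :=
  fun i => (p i - q i) - (p (Fin.last n) - q (Fin.last n))

/-- The tropical distance on `ℝⁿ/ℝ(1,…,1)`. -/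
noncomputable def tdist (n : ℕ) (p q : Fin (n+1) → ℝ) : ℝ :=
  Finset.univ.sup' Finset.univ_nonempty
    (fun ij : Fin (n+1) × Fin (n+1) =>
      max |normDiff n p q ij.1| |normDiff n p q ij.1 - normDiff n p q ij.2|)

/-!
The differences `x k = a_{k1} - a_{k2}` of the first two columns all lie in the interval
`[a_{21}, -a_{12}]`, by `a_{k2} + a_{21} ≤ a_{k1}` and `a_{k1} + a_{12} ≤ a_{k2}`. Since the diagonal
vanishes, `x 1 = -a_{12}` and `x 2 = a_{21}` are its endpoints, so the oscillation
`max x - min x`, which is the tropical distance, is exactly `-(a_{12} + a_{21})`.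
-/

open Set

section TropicalDistance

variable {n : ℕ} {p q : Fin (n+1) → ℝ}

lemma normDiff_sub_normDiff (i j : Fin (n+1)) :
    normDiff n p q i - normDiff n p q j = (p i - q i) - (p j - q j) := by
  simp only [normDiff]
  ring

lemma abs_sub_le_tdist (i j : Fin (n+1)) :
    |(p i - q i) - (p j - q j)| ≤ tdist n p q := by
  rw [← normDiff_sub_normDiff]
  exact (le_max_right _ _).trans
    (Finset.le_sup' (fun ij : Fin (n+1) × Fin (n+1) =>
      max |normDiff n p q ij.1| |normDiff n p q ij.1 - normDiff n p q ij.2|)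
      (Finset.mem_univ (i, j)))

lemma tdist_le_of_forall_mem_Icc {a b : ℝ} (h : ∀ k, p k - q k ∈ Icc a b) :
    tdist n p q ≤ b - a := by
  have hdiff : ∀ i j, |normDiff n p q i - normDiff n p q j| ≤ b - a := fun i j => by
    rw [normDiff_sub_normDiff, ← Real.dist_eq]
    exact Real.dist_le_of_mem_Icc (h i) (h j)
  refine Finset.sup'_le _ _ fun ij _ => max_le ?_ (hdiff ij.1 ij.2)
  simpa [normDiff] using hdiff ij.1 (Fin.last n)

theorem tdist_eq_of_forall_mem_Icc {a b : ℝ} (h : ∀ k, p k - q k ∈ Icc a b)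
    {i j : Fin (n+1)} (hi : p i - q i = b) (hj : p j - q j = a) :
    tdist n p q = b - a :=
  le_antisymm (tdist_le_of_forall_mem_Icc h) <| by
    simpa [hi, hj, abs_of_nonneg (sub_nonneg.2 ((h i).1.trans (h i).2))]
      using abs_sub_le_tdist (p := p) (q := q) i j

end TropicalDistance

lemma sub_mem_Icc_of_add_le {ι : Type*} {A : ι → ι → ℝ}
    (hsub : ∀ i j k, A i k + A k j ≤ A i j) (i j k : ι) :
    A k i - A k j ∈ Icc (A j i) (-A i j) :=
  ⟨by linarith [hsub k i j], by linarith [hsub k j i]⟩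

/-- For a normal idempotent matrix `A`, the tropical distance between the classes
of its first two columns equals `|a_{12} + a_{21}| = -(a_{12} + a_{21})`. -/
theorem stmt7 (n : ℕ) (A : Matrix (Fin (n+2)) (Fin (n+2)) ℝ)
    (hdiag : ∀ i, A i i = 0) (hneg : ∀ i j, A i j ≤ 0)
    (hsub : ∀ i j k, A i k + A k j ≤ A i j) :
    tdist (n+1) (fun i => A i 0) (fun i => A i 1) = |A 0 1 + A 1 0| ∧
    tdist (n+1) (fun i => A i 0) (fun i => A i 1) = -(A 0 1 + A 1 0) := by
  have hdist : tdist (n+1) (fun i => A i 0) (fun i => A i 1) = -(A 0 1 + A 1 0) := by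
    rw [tdist_eq_of_forall_mem_Icc (sub_mem_Icc_of_add_le hsub 0 1)
      (i := 0) (by simp [hdiag]) (j := 1) (by simp [hdiag])]
    ring
  exact ⟨hdist.trans (abs_of_nonpos (add_nonpos (hneg 0 1) (hneg 1 0))).symm, hdist⟩
end

section
/- For any real 2×n matrix with columns p, q ∈ ℝⁿ, the tropical 2×2 minors m_{kl} = max{p_k + q_l, p_l + q_k} satisfy the tropical Plücker relation: for any four indices i < j < k < l, the maximum of {m_{ij} + m_{kl}, m_{ik} + m_{jl}, m_{il} + m_{jk}} is attained at least twice. -/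
/-!
Writing `u_a = p_a - q_a`, each tropical minor is `m_{ab} = max(u_a, u_b) + q_a + q_b`, so all three
sums carry the same summand `q_i + q_j + q_k + q_l` and the claim reduces to four reals `a, b, c, d`
and the sums `max(a,b) + max(c,d)`, `max(a,c) + max(b,d)`, `max(a,d) + max(b,c)`. These are
permuted among themselves by the symmetries of the pairing `{a,b | c,d}`, so one may assume that
`a` is the largest value. The second largest value then meets `a` in two of the three pairings,
and those two sums equal the maximum.
-/

section

variable {α : Type*} [LinearOrder α]

def MaxAttainedTwice (x y z : α) : Prop :=
  (x = max x (max y z) ∧ y = max x (max y z)) ∨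
  (x = max x (max y z) ∧ z = max x (max y z)) ∨
  (y = max x (max y z) ∧ z = max x (max y z))

namespace MaxAttainedTwice

variable {x y z : α}

theorem swap_right (h : MaxAttainedTwice x y z) : MaxAttainedTwice x z y := by
  unfold MaxAttainedTwice at *
  rw [max_comm z y]
  tauto

theorem of_left_eq_right (hxz : x = z) (hyx : y ≤ x) : MaxAttainedTwice x y z := by
  have hmax : max x (max y z) = x := by simp [← hxz, hyx]
  exact Or.inr (Or.inl ⟨hmax.symm, by rw [hmax]; exact hxz.symm⟩)

theorem of_middle_eq_right (hyz : y = z) (hxy : x ≤ y) : MaxAttainedTwice x y z := by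
  have hmax : max x (max y z) = y := by simp [← hyz, hxy]
  exact Or.inr (Or.inr ⟨hmax.symm, by rw [hmax]; exact hyz.symm⟩)

theorem add_const [AddCommMonoid α] [IsOrderedAddMonoid α] (h : MaxAttainedTwice x y z) (c : α) :
    MaxAttainedTwice (x + c) (y + c) (z + c) := by
  unfold MaxAttainedTwice at *
  simp only [max_add_add_right]
  have hc {a b : α} (hab : a = b) : a + c = b + c := congrArg (· + c) hab
  rcases h with ⟨hx, hy⟩ | ⟨hx, hz⟩ | ⟨hy, hz⟩
  · exact Or.inl ⟨hc hx, hc hy⟩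
  · exact Or.inr (Or.inl ⟨hc hx, hc hz⟩)
  · exact Or.inr (Or.inr ⟨hc hy, hc hz⟩)

end MaxAttainedTwice

theorem maxAttainedTwice_max_add_max [AddCommMonoid α] [IsOrderedAddMonoid α] (a b c d : α) :
    MaxAttainedTwice (max a b + max c d) (max a c + max b d) (max a d + max b c) := by
  wlog hba : b ≤ a generalizing a b
  · have h := (this b a (le_of_not_ge hba)).swap_right
    rwa [max_comm b a, add_comm (max b c), add_comm (max b d)] at h
  wlog hdc : d ≤ c generalizing c d
  · have h := (this d c (le_of_not_ge hdc)).swap_right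
    rwa [max_comm d c] at h
  wlog hca : c ≤ a generalizing a b c d
  · have h := this c d hdc a b hba (le_of_not_ge hca)
    rwa [add_comm (max c d), max_comm c a, max_comm d b, max_comm c b, max_comm d a,
      add_comm (max b c)] at h
  rw [max_eq_left hba, max_eq_left hdc, max_eq_left hca, max_eq_left (hdc.trans hca)]
  rcases le_total b c with hbc | hcb
  · rw [max_eq_right hbc]
    exact .of_left_eq_right rfl (add_le_add_right (max_le hbc hdc) a)
  · rw [max_eq_left hcb, max_eq_left (hdc.trans hcb)]
    exact .of_middle_eq_right rfl (add_le_add_right hcb a)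

end

theorem max_add_add_eq_max_sub_add {α : Type*} [AddCommGroup α] [LinearOrder α]
    [IsOrderedAddMonoid α] (p p' q q' : α) : max (p + q') (p' + q) = max (p - q) (p' - q') + (q + q') := by
  rw [← max_add_add_right]
  congr 1 <;> abel

theorem stmt11_general (n : ℕ) (p q : Fin n → ℝ) (i j k l : Fin n) :
    let m : Fin n → Fin n → ℝ := fun a b => max (p a + q b) (p b + q a)
    let x := m i j + m k l
    let y := m i k + m j l
    let z := m i l + m j k
    (x = max x (max y z) ∧ y = max x (max y z)) ∨
    (x = max x (max y z) ∧ z = max x (max y z)) ∨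
    (y = max x (max y z) ∧ z = max x (max y z)) := by
  intro m x y z
  let u a := p a - q a
  have hm a b : m a b = max (u a) (u b) + (q a + q b) := max_add_add_eq_max_sub_add _ _ _ _
  let s := q i + q j + q k + q l
  have hx : x = max (u i) (u j) + max (u k) (u l) + s := by simp only [x, hm]; ring
  have hy : y = max (u i) (u k) + max (u j) (u l) + s := by simp only [y, hm]; ring
  have hz : z = max (u i) (u l) + max (u j) (u k) + s := by simp only [z, hm]; ring
  show MaxAttainedTwice x y z
  rw [hx, hy, hz]
  exact (maxAttainedTwice_max_add_max (u i) (u j) (u k) (u l)).add_const s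

/-- Tropical Plücker relation: for any `p, q ∈ ℝⁿ`, the tropical minors
`m_{kl} = max{p_k + q_l, p_l + q_k}` satisfy, for any `i < j < k < l`, that the
maximum of `m_{ij}+m_{kl}`, `m_{ik}+m_{jl}`, `m_{il}+m_{jk}` is attained at
least twice. -/
theorem stmt11 (n : ℕ) (p q : Fin n → ℝ) (i j k l : Fin n)
    (hij : i < j) (hjk : j < k) (hkl : k < l) :
    let m : Fin n → Fin n → ℝ := fun a b => max (p a + q b) (p b + q a)
    let x := m i j + m k l
    let y := m i k + m j l
    let z := m i l + m j k
    (x = max x (max y z) ∧ y = max x (max y z)) ∨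
    (x = max x (max y z) ∧ z = max x (max y z)) ∨
    (y = max x (max y z) ∧ z = max x (max y z)) :=
  stmt11_general n p q i j k l
end

section
/- Let A be a 4×4 normal idempotent matrix with first two columns p, q, and suppose a_{32} + a_{41} < a_{31} + a_{42} (type {13,24}). Then the points v¹³ = (-a_{41}, -a_{42}, a_{31} - a_{41}, 0) and v²⁴ = (-a_{31}, -a_{32}, 0, a_{42} - a_{32}) are tropical linear combinations of p and q: v¹³ ≡ max(p + (-a_{41})·1, q + (-a_{42})·1) and v²⁴ ≡ max(p + (-a_{31})·1, q + (-a_{32})·1) modulo (1,1,1,1), where max is taken coordinatewise. -/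
/-!
Scaling `p` and `q` by `-a_{k1}` and `-a_{k2}` makes both columns vanish in coordinate `k`, so
their maximum is `0` there. In coordinates `1` and `2` the inequalities `a_{k1} + a_{12} ≤ a_{k2}`
and `a_{k2} + a_{21} ≤ a_{k1}` decide which column attains the maximum, and in the remaining
coordinate this is decided by the type condition `a_{32} + a_{41} < a_{31} + a_{42}`.
-/

section ColumnCombination

variable {n : Type*} (A : Matrix n n ℝ)

def colComb (j j' k : n) (i : n) : ℝ :=
  max (A i j + -A k j) (A i j' + -A k j')

variable {A}

theorem colComb_self_row (j j' k : n) : colComb A j j' k k = 0 := by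
  simp [colComb]

theorem colComb_eq_left {i j j' k : n} (h : A i j' + A k j ≤ A i j + A k j') :
    colComb A j j' k i = A i j - A k j := by
  rw [colComb, max_eq_left (by linarith)]
  ring

theorem colComb_eq_right {i j j' k : n} (h : A i j + A k j' ≤ A i j' + A k j) :
    colComb A j j' k i = A i j' - A k j' := by
  rw [colComb, max_eq_right (by linarith)]
  ring

end ColumnCombination

theorem stmt12_general (A : Matrix (Fin 4) (Fin 4) ℝ)
    (hdiag : ∀ i, A i i = 0)
    (hsub : ∀ i j k, A i k + A k j ≤ A i j)
    (htype : A 2 1 + A 3 0 < A 2 0 + A 3 1) :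
    (∃ c : ℝ, ∀ i,
      (![-(A 3 0), -(A 3 1), A 2 0 - A 3 0, 0] : Fin 4 → ℝ) i
        = max (A i 0 + (-(A 3 0))) (A i 1 + (-(A 3 1))) + c) ∧
    (∃ c : ℝ, ∀ i,
      (![-(A 2 0), -(A 2 1), 0, A 3 1 - A 2 1] : Fin 4 → ℝ) i
        = max (A i 0 + (-(A 2 0))) (A i 1 + (-(A 2 1))) + c) := by
  have left (k : Fin 4) : colComb A 0 1 k 0 = -A k 0 := by
    rw [colComb_eq_left (by linarith [hsub k 1 0, hdiag 0]), hdiag 0, zero_sub]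
  have right (k : Fin 4) : colComb A 0 1 k 1 = -A k 1 := by
    rw [colComb_eq_right (by linarith [hsub k 0 1, hdiag 1]), hdiag 1, zero_sub]
  have v13 : ![-(A 3 0), -(A 3 1), A 2 0 - A 3 0, 0] = colComb A 0 1 3 := by
    ext i
    fin_cases i
    · exact (left 3).symm
    · exact (right 3).symm
    · exact (colComb_eq_left htype.le).symm
    · exact (colComb_self_row 0 1 3).symm
  have v24 : ![-(A 2 0), -(A 2 1), 0, A 3 1 - A 2 1] = colComb A 0 1 2 := by
    ext i
    fin_cases i
    · exact (left 2).symm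
    · exact (right 2).symm
    · exact (colComb_self_row 0 1 2).symm
    · exact (colComb_eq_right (by linarith)).symm
  refine ⟨⟨0, fun i => ?_⟩, ⟨0, fun i => ?_⟩⟩
  · rw [v13, add_zero, colComb]
  · rw [v24, add_zero, colComb]

/-- For a 4×4 normal idempotent matrix with `a_{32}+a_{41} < a_{31}+a_{42}`
(type {13,24}), the vertices `v¹³ = (-a_{41}, -a_{42}, a_{31}-a_{41}, 0)` and
`v²⁴ = (-a_{31}, -a_{32}, 0, a_{42}-a_{32})` are tropical linear combinations of
the first two columns `p, q` of `A`, modulo `(1,1,1,1)`. -/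
theorem stmt12 (A : Matrix (Fin 4) (Fin 4) ℝ)
    (hdiag : ∀ i, A i i = 0) (hneg : ∀ i j, A i j ≤ 0)
    (hsub : ∀ i j k, A i k + A k j ≤ A i j)
    (htype : A 2 1 + A 3 0 < A 2 0 + A 3 1) :
    (∃ c : ℝ, ∀ i,
      (![-(A 3 0), -(A 3 1), A 2 0 - A 3 0, 0] : Fin 4 → ℝ) i
        = max (A i 0 + (-(A 3 0))) (A i 1 + (-(A 3 1))) + c) ∧
    (∃ c : ℝ, ∀ i,
      (![-(A 2 0), -(A 2 1), 0, A 3 1 - A 2 1] : Fin 4 → ℝ) i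
        = max (A i 0 + (-(A 2 0))) (A i 1 + (-(A 2 1))) + c) :=
  stmt12_general A hdiag hsub htype
end

section
/- Let A be a 3×3 normal idempotent matrix with first two columns p = (0, a_{21}, a_{31}) and q = (a_{12}, 0, a_{32}). Then the Cramer vertex w = (-a_{31}, -a_{32}, 0) satisfies d(p, w) = -f_{23} = -(a_{21} + a_{32} - a_{31}), d(q, w) = f_{13} = a_{32} - a_{12} - a_{31}, and d(p,q) = d(p,w) + d(w,q). -/
lemma normDiff_last (n : ℕ) (p q : Fin (n+1) → ℝ) : normDiff n p q (Fin.last n) = 0 :=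
  sub_self _

lemma normDiff_comm (n : ℕ) (p q : Fin (n+1) → ℝ) : normDiff n q p = -normDiff n p q := by
  ext i
  simp only [normDiff, Pi.neg_apply]
  ring

lemma tdist_comm (n : ℕ) (p q : Fin (n+1) → ℝ) : tdist n q p = tdist n p q := by
  simp only [tdist, normDiff_comm n p q, Pi.neg_apply, abs_neg, ← neg_sub']

lemma tdist_two (p q : Fin 3 → ℝ) :
    tdist 2 p q = max (max |normDiff 2 p q 0| |normDiff 2 p q 1|)
      |normDiff 2 p q 0 - normDiff 2 p q 1| := by
  have hx2 : normDiff 2 p q 2 = 0 := normDiff_last 2 p q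
  unfold tdist
  generalize normDiff 2 p q = x at hx2 ⊢
  have h10 : |x 1 - x 0| = |x 0 - x 1| := abs_sub_comm _ _
  have le_max3 : ∀ i j, |x i - x j| ≤ max (max |x 0| |x 1|) |x 0 - x 1| := by
    intro i j
    fin_cases i <;> fin_cases j <;> simp [hx2, h10]
  apply le_antisymm
  · exact Finset.sup'_le _ _ fun ij _ =>
      max_le (by simpa [hx2] using le_max3 ij.1 2) (le_max3 ij.1 ij.2)
  · exact max_le (max_le (Finset.le_sup'_of_le _ (Finset.mem_univ (0, 0)) (le_max_left _ _))
      (Finset.le_sup'_of_le _ (Finset.mem_univ (1, 1)) (le_max_left _ _)))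
      (Finset.le_sup'_of_le _ (Finset.mem_univ (0, 1)) (le_max_right _ _))

lemma tdist_two_of_nonneg_of_nonpos {p q : Fin 3 → ℝ}
    (h₀ : 0 ≤ normDiff 2 p q 0) (h₁ : normDiff 2 p q 1 ≤ 0) :
    tdist 2 p q = normDiff 2 p q 0 - normDiff 2 p q 1 := by
  rw [tdist_two, abs_of_nonneg h₀, abs_of_nonpos h₁, abs_of_nonneg (by linarith)]
  exact max_eq_right (max_le (by linarith) (by linarith))

theorem stmt15_general (A : Matrix (Fin 3) (Fin 3) ℝ)
    (hdiag : ∀ i, A i i = 0)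
    (hsub : ∀ i j k, A i k + A k j ≤ A i j) :
    let p : Fin 3 → ℝ := fun i => A i 0
    let q : Fin 3 → ℝ := fun i => A i 1
    let w : Fin 3 → ℝ := ![-(A 2 0), -(A 2 1), 0]
    tdist 2 p w = -(A 1 0 + A 2 1 - A 2 0) ∧
    tdist 2 q w = A 2 1 - A 0 1 - A 2 0 ∧
    tdist 2 p q = tdist 2 p w + tdist 2 w q := by
  intro p q w
  have f₂₃ : A 1 0 + A 2 1 - A 2 0 ≤ 0 := by linarith [hsub 2 0 1]
  have f₁₃ : 0 ≤ A 2 1 - A 0 1 - A 2 0 := by linarith [hsub 2 1 0]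
  obtain ⟨hpw₀, hpw₁, hwq₀, hwq₁, hpq₀, hpq₁⟩ :
      normDiff 2 p w 0 = 0 ∧ normDiff 2 p w 1 = A 1 0 + A 2 1 - A 2 0 ∧
      normDiff 2 w q 0 = A 2 1 - A 0 1 - A 2 0 ∧ normDiff 2 w q 1 = 0 ∧
      normDiff 2 p q 0 = A 2 1 - A 0 1 - A 2 0 ∧ normDiff 2 p q 1 = A 1 0 + A 2 1 - A 2 0 := by
    refine ⟨?_, ?_, ?_, ?_, ?_, ?_⟩ <;>
      simp only [normDiff, p, q, w, hdiag, Fin.reduceLast, Matrix.cons_val] <;> ring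
  have dpw : tdist 2 p w = -(A 1 0 + A 2 1 - A 2 0) := by
    rw [tdist_two_of_nonneg_of_nonpos hpw₀.ge (hpw₁ ▸ f₂₃), hpw₀, hpw₁, zero_sub]
  have dwq : tdist 2 w q = A 2 1 - A 0 1 - A 2 0 := by
    rw [tdist_two_of_nonneg_of_nonpos (hwq₀ ▸ f₁₃) hwq₁.le, hwq₀, hwq₁, sub_zero]
  refine ⟨dpw, (tdist_comm 2 w q).trans dwq, ?_⟩
  rw [tdist_two_of_nonneg_of_nonpos (hpq₀ ▸ f₁₃) (hpq₁ ▸ f₂₃), hpq₀, hpq₁, dpw, dwq]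
  ring

/-- For a 3×3 normal idempotent matrix with first two columns
`p = (0,a_{21},a_{31})`, `q = (a_{12},0,a_{32})`, the Cramer vertex
`w = (-a_{31},-a_{32},0)` satisfies `d(p,w) = -(a_{21}+a_{32}-a_{31})`,
`d(q,w) = a_{32}-a_{12}-a_{31}`, and `d(p,q) = d(p,w) + d(w,q)`. -/
theorem stmt15 (A : Matrix (Fin 3) (Fin 3) ℝ)
    (hdiag : ∀ i, A i i = 0) (hneg : ∀ i j, A i j ≤ 0)
    (hsub : ∀ i j k, A i k + A k j ≤ A i j) :
    let p : Fin 3 → ℝ := fun i => A i 0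
    let q : Fin 3 → ℝ := fun i => A i 1
    let w : Fin 3 → ℝ := ![-(A 2 0), -(A 2 1), 0]
    tdist 2 p w = -(A 1 0 + A 2 1 - A 2 0) ∧
    tdist 2 q w = A 2 1 - A 0 1 - A 2 0 ∧
    tdist 2 p q = tdist 2 p w + tdist 2 w q :=
  stmt15_general A hdiag hsub
end

section
/- Let A be a 3×3 normal idempotent matrix with columns p = column 1, q = column 2, and w = (-a_{31}, -a_{32}, 0). Then w is a tropical linear combination of p and q: w ≡ max(p + (-a_{31})·(1,1,1), q + (-a_{32})·(1,1,1)) coordinatewise, modulo ℝ(1,1,1). -/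
/-! The triangle inequality `a_{ki} + a_{ij} ≤ a_{kj}` says that every column difference
`a_{ij} - a_{kj}` is at most `-a_{ki}`, with equality at `j = i` (as `a_{ii} = 0`) and, when
`i = k`, at every `j`. Hence the tropical combination of columns `0, 1` with coefficients
`-a_{20}, -a_{21}` is exactly the row `(-a_{2i})_i = w`. -/

namespace Matrix

variable {n α : Type*} [AddCommGroup α] [LinearOrder α] [IsOrderedAddMonoid α]

theorem sub_le_neg_of_add_le {A : Matrix n n α} (hsub : ∀ i j k, A i k + A k j ≤ A i j)
    (k i j : n) : A i j - A k j ≤ -A k i :=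
  calc A i j - A k j ≤ A i j - (A k i + A i j) := sub_le_sub_left (hsub k j i) _
    _ = -A k i := by abel

theorem max_sub_eq_neg_of_add_le {A : Matrix n n α} (hdiag : ∀ i, A i i = 0)
    (hsub : ∀ i j k, A i k + A k j ≤ A i j) {k i j₁ j₂ : n} (hi : i = j₁ ∨ i = j₂ ∨ i = k) :
    max (A i j₁ - A k j₁) (A i j₂ - A k j₂) = -A k i := by
  refine le_antisymm
    (max_le (sub_le_neg_of_add_le hsub k i j₁) (sub_le_neg_of_add_le hsub k i j₂)) ?_
  rcases hi with rfl | rfl | rfl <;> simp [hdiag]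

end Matrix

theorem stmt16_general (A : Matrix (Fin 3) (Fin 3) ℝ)
    (hdiag : ∀ i, A i i = 0)
    (hsub : ∀ i j k, A i k + A k j ≤ A i j) :
    ∃ c : ℝ, ∀ i,
      (![-(A 2 0), -(A 2 1), 0] : Fin 3 → ℝ) i
        = max (A i 0 + (-(A 2 0))) (A i 1 + (-(A 2 1))) + c := by
  refine ⟨0, fun i => ?_⟩
  have hw : (![-(A 2 0), -(A 2 1), 0] : Fin 3 → ℝ) i = -A 2 i := by
    fin_cases i <;> simp [hdiag]
  rw [hw, add_zero, ← sub_eq_add_neg, ← sub_eq_add_neg,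
    Matrix.max_sub_eq_neg_of_add_le hdiag hsub]
  fin_cases i <;> simp

/-- For a 3×3 normal idempotent matrix with columns `p, q`, the Cramer vertex
`w = (-a_{31},-a_{32},0)` is a tropical linear combination
`max(p + (-a_{31})·1, q + (-a_{32})·1)` modulo `ℝ(1,1,1)`. -/
theorem stmt16 (A : Matrix (Fin 3) (Fin 3) ℝ)
    (hdiag : ∀ i, A i i = 0) (hneg : ∀ i j, A i j ≤ 0)
    (hsub : ∀ i j k, A i k + A k j ≤ A i j) :
    ∃ c : ℝ, ∀ i,
      (![-(A 2 0), -(A 2 1), 0] : Fin 3 → ℝ) i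
        = max (A i 0 + (-(A 2 0))) (A i 1 + (-(A 2 1))) + c :=
  stmt16_general A hdiag hsub
end
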